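/- Let u : (-1,1)² → ℝ² be defined by u(x₁,x₂) = (x₁, x₂x₁) for x₁ > 0 and u(x₁,x₂) = (x₁, −x₂x₁) for x₁ ≤ 0. Then det ∇u(x) = |x₁| > 0 for a.e. x, and the dilatation K(x) = |∇u(x)|²/det ∇u(x) satisfies ∫_{(-1,1)²} K(x) dx = ∞. -/

import Mathlib

open Matrix MeasureTheory

/-- The a.e. Jacobian matrix of a map ℝ² → ℝ². -/
noncomputable def Jac (f : (Fin 2 → ℝ) → (Fin 2 → ℝ)) (x : Fin 2 → ℝ) :
    Matrix (Fin 2) (Fin 2) ℝ :=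
  LinearMap.toMatrix' (fderiv ℝ f x).toLinearMap

/-- The bow-tie map u of Example 1. -/
noncomputable def uEx (x : Fin 2 → ℝ) : Fin 2 → ℝ :=
  if 0 < x 0 then ![x 0, x 1 * x 0] else ![x 0, -(x 1 * x 0)]

/-- The open unit square (-1,1)². -/
def Q1 : Set (Fin 2 → ℝ) := Set.univ.pi fun _ => Set.Ioo (-1 : ℝ) 1

/-- Frobenius norm of a 2×2 matrix. -/
noncomputable def frobNorm (A : Matrix (Fin 2) (Fin 2) ℝ) : ℝ :=
  Real.sqrt (∑ i, ∑ j, (A i j) ^ 2)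

open Set
open scoped ENNReal

/-!
Since `x₂ x₁ = x₂ |x₁|` for `x₁ > 0` and `-x₂ x₁ = x₂ |x₁|` for `x₁ ≤ 0`, the map is
`u(x) = (x₁, x₂ |x₁|)`. Off the null line `x₁ = 0` its Jacobian is `[[1, 0], [x₂ sgn x₁, |x₁|]]`,
so `det ∇u = |x₁|` and `|∇u|² = 1 + x₂² + x₁² ≥ 1`. Hence `K(x) ≥ 1 / |x₁|`, which is not
integrable across `x₁ = 0`.
-/

lemma uEx_eq : uEx = fun y => ![y 0, y 1 * |y 0|] := by
  funext y
  unfold uEx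
  split_ifs with h
  · rw [abs_of_pos h]
  · rw [abs_of_nonpos (not_lt.1 h), mul_neg]

open ContinuousLinearMap in
lemma hasFDerivAt_uEx {x : Fin 2 → ℝ} (hx : x 0 ≠ 0) :
    HasFDerivAt uEx (pi ![proj 0, (x 1 * SignType.sign (x 0)) • proj 0 + |x 0| • proj 1] :
      (Fin 2 → ℝ) →L[ℝ] Fin 2 → ℝ) x := by
  rw [uEx_eq]
  refine hasFDerivAt_pi'' fun i => ?_
  fin_cases i
  · simpa using hasFDerivAt_apply (𝕜 := ℝ) (0 : Fin 2) x
  · refine ((hasFDerivAt_apply 1 x).mul ((hasFDerivAt_apply 0 x).abs hx)).congr_fderiv ?_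
    ext v
    simp
    ring

lemma jac_uEx {x : Fin 2 → ℝ} (hx : x 0 ≠ 0) :
    Jac uEx x = !![1, 0; x 1 * SignType.sign (x 0), |x 0|] := by
  rw [Jac, (hasFDerivAt_uEx hx).fderiv]
  ext i j
  fin_cases i <;> fin_cases j <;> simp

lemma frobNorm_sq (A : Matrix (Fin 2) (Fin 2) ℝ) :
    frobNorm A ^ 2 = ∑ i, ∑ j, A i j ^ 2 :=
  Real.sq_sqrt (by positivity)

lemma det_jac_uEx {x : Fin 2 → ℝ} (hx : x 0 ≠ 0) : (Jac uEx x).det = |x 0| := by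
  simp [jac_uEx hx, Matrix.det_fin_two_of]

lemma frobNorm_jac_uEx_sq {x : Fin 2 → ℝ} (hx : x 0 ≠ 0) :
    frobNorm (Jac uEx x) ^ 2 = 1 + x 1 ^ 2 + x 0 ^ 2 := by
  rw [frobNorm_sq, jac_uEx hx]
  rcases hx.lt_or_gt with h | h <;> simp [Fin.sum_univ_two, sign_neg, sign_pos, h, add_assoc]

lemma not_integrableOn_inv_Ioo {a b : ℝ} (ha : a ≤ 0) (hb : 0 < b) :
    ¬ IntegrableOn (fun x : ℝ => x⁻¹) (Ioo a b) := by
  intro h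
  have h0b : IntervalIntegrable (fun x : ℝ => x⁻¹) volume 0 b :=
    (intervalIntegrable_iff_integrableOn_Ioo_of_le hb.le).2
      (h.mono_set (Ioo_subset_Ioo_left ha))
  simp [hb.ne] at h0b

lemma lintegral_ofReal_abs_inv_Ioo {a b : ℝ} (ha : a ≤ 0) (hb : 0 < b) :
    ∫⁻ x in Ioo a b, ENNReal.ofReal |x|⁻¹ = ∞ := by
  have h := not_integrableOn_inv_Ioo ha hb
  rw [IntegrableOn, Integrable, HasFiniteIntegral, not_and] at h
  simpa [← abs_inv, ← Real.enorm_eq_ofReal_abs] using h measurable_inv.aestronglyMeasurable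

lemma lintegral_comp_eval {ι : Type*} [Fintype ι] [DecidableEq ι] {α : ι → Type*}
    [∀ i, MeasurableSpace (α i)] (μ : ∀ i, Measure (α i)) [∀ i, SigmaFinite (μ i)]
    (i : ι) {f : α i → ℝ≥0∞} (hf : Measurable f) :
    ∫⁻ x, f (x i) ∂Measure.pi μ = (∏ j ∈ Finset.univ.erase i, μ j univ) * ∫⁻ y, f y ∂μ i := by
  rw [← lintegral_map hf (measurable_pi_apply i), Measure.pi_map_eval, lintegral_smul_measure,
    smul_eq_mul]

lemma lintegral_Q1_ofReal_abs_inv : ∫⁻ x in Q1, ENNReal.ofReal |x 0|⁻¹ = ∞ := by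
  rw [Q1, volume_pi, Measure.restrict_pi_pi,
    lintegral_comp_eval (fun _ => volume.restrict (Ioo (-1 : ℝ) 1)) 0
      (f := fun t => ENNReal.ofReal |t|⁻¹) measurable_abs.inv.ennreal_ofReal,
    lintegral_ofReal_abs_inv_Ioo (by norm_num) one_pos]
  simp

/-- Example 1: det ∇u = |x₁| > 0 a.e. on (-1,1)², but the dilatation
K = |∇u|²/det ∇u is not integrable. -/
theorem stmt_12 :
    (∀ᵐ x : Fin 2 → ℝ, x ∈ Q1 →
        (Jac uEx x).det = |x 0| ∧ 0 < (Jac uEx x).det) ∧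
    ∫⁻ x in Q1, ENNReal.ofReal (frobNorm (Jac uEx x) ^ 2 / (Jac uEx x).det) = ⊤ := by
  have hae : ∀ᵐ x : Fin 2 → ℝ, x 0 ≠ 0 := Measure.ae_eval_ne _ 0 0
  refine ⟨?_, ?_⟩
  · filter_upwards [hae] with x hx _
    rw [det_jac_uEx hx]
    exact ⟨rfl, abs_pos.2 hx⟩
  · rw [eq_top_iff, ← lintegral_Q1_ofReal_abs_inv]
    refine lintegral_mono_ae (ae_restrict_of_ae ?_)
    filter_upwards [hae] with x hx
    rw [det_jac_uEx hx, frobNorm_jac_uEx_sq hx, inv_eq_one_div]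
    gcongr
    linarith [sq_nonneg (x 0), sq_nonneg (x 1)]
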